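/- There exists a constant C > 0 such that for every real μ ≥ 1/2 and every real r with 0 < r ≤ 1, one has K_μ(r) ≤ C · 2^{-μ} r^{-μ} Γ(2μ) / Γ(μ + 1/2). -/

import Mathlib

/-! Since `(t² - 1)^(μ - 1/2) ≤ t^(2μ - 1)` for `t ≥ 1` and `μ ≥ 1/2`, the integral in
`besselK μ r` is at most `∫₀^∞ t^(2μ - 1) e^{-rt} dt = r^(-2μ) Γ(2μ)`; against the prefactor
`r^μ` this leaves `r^(-μ)`, so `C = √π` works. -/

open Real

/-- The modified Bessel function of the second kind, via the integral representation
`K_μ(r) = (π^{1/2} 2^{-μ} r^{μ} / Γ(μ + 1/2)) · ∫_{1}^{∞} e^{-rt} (t² - 1)^{μ - 1/2} dt`. -/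
noncomputable def besselK (μ r : ℝ) : ℝ :=
  (Real.sqrt π * 2 ^ (-μ) * r ^ μ / Real.Gamma (μ + 1 / 2)) *
    ∫ t in Set.Ioi (1 : ℝ), Real.exp (-r * t) * (t ^ 2 - 1) ^ (μ - 1 / 2)

open Set MeasureTheory

lemma exp_mul_sq_sub_one_rpow_le {μ r t : ℝ} (hμ : 1 / 2 ≤ μ) (ht : 1 ≤ t) :
    exp (-r * t) * (t ^ 2 - 1) ^ (μ - 1 / 2) ≤ t ^ (2 * μ - 1) * exp (-(r * t)) := by
  have hpow : (t ^ 2 - 1) ^ (μ - 1 / 2) ≤ t ^ (2 * μ - 1) :=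
    calc (t ^ 2 - 1) ^ (μ - 1 / 2) ≤ (t ^ 2) ^ (μ - 1 / 2) :=
          rpow_le_rpow (by nlinarith) (by linarith) (by linarith)
      _ = t ^ (2 * μ - 1) := by
          rw [← rpow_natCast t 2, ← rpow_mul (by linarith)]
          ring_nf
  rw [neg_mul, mul_comm]
  exact mul_le_mul_of_nonneg_right hpow (exp_pos _).le

lemma setIntegral_Ioi_one_exp_mul_sq_sub_one_rpow_le {μ r : ℝ} (hμ : 1 / 2 ≤ μ)
    (hr : 0 < r) :
    ∫ t in Ioi (1 : ℝ), exp (-r * t) * (t ^ 2 - 1) ^ (μ - 1 / 2) ≤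
      (1 / r) ^ (2 * μ) * Gamma (2 * μ) := by
  have hμ₀ : 0 < 2 * μ := by linarith
  have hGamma := integral_rpow_mul_exp_neg_mul_Ioi hμ₀ hr
  have hint : IntegrableOn (fun t : ℝ => t ^ (2 * μ - 1) * exp (-(r * t))) (Ioi 0) :=
    -- a non-integrable function would have Bochner integral `0`, not `r^(-2μ) Γ(2μ) > 0`
    .of_integral_ne_zero <| by
      rw [hGamma]
      exact (mul_pos (by positivity) (Gamma_pos_of_pos hμ₀)).ne'
  rw [← hGamma]
  calc ∫ t in Ioi (1 : ℝ), exp (-r * t) * (t ^ 2 - 1) ^ (μ - 1 / 2)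
      ≤ ∫ t in Ioi (1 : ℝ), t ^ (2 * μ - 1) * exp (-(r * t)) := by
        refine integral_mono_of_nonneg ?_ (hint.mono_set (Ioi_subset_Ioi zero_le_one)) ?_
        · exact ae_restrict_of_forall_mem measurableSet_Ioi fun t (ht : 1 < t) =>
            mul_nonneg (exp_pos _).le (rpow_nonneg (by nlinarith) _)
        · exact ae_restrict_of_forall_mem measurableSet_Ioi fun t (ht : 1 < t) =>
            exp_mul_sq_sub_one_rpow_le hμ ht.le
    _ ≤ ∫ t in Ioi (0 : ℝ), t ^ (2 * μ - 1) * exp (-(r * t)) :=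
        setIntegral_mono_set hint
          (ae_restrict_of_forall_mem measurableSet_Ioi fun t (ht : 0 < t) => by positivity)
          (ae_of_all _ (Ioi_subset_Ioi zero_le_one))

theorem besselK_le_sqrt_pi_mul {μ r : ℝ} (hμ : 1 / 2 ≤ μ) (hr : 0 < r) :
    besselK μ r ≤ √π * (2 ^ (-μ) * r ^ (-μ) * Gamma (2 * μ) / Gamma (μ + 1 / 2)) := by
  have hprefactor : 0 ≤ √π * 2 ^ (-μ) * r ^ μ / Gamma (μ + 1 / 2) := by
    have := Gamma_pos_of_pos (show 0 < μ + 1 / 2 by linarith)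
    positivity
  have hrpow : r ^ μ * (1 / r) ^ (2 * μ) = r ^ (-μ) := by
    rw [one_div, inv_rpow hr.le, ← rpow_neg hr.le, ← rpow_add hr]
    ring_nf
  calc besselK μ r
      ≤ √π * 2 ^ (-μ) * r ^ μ / Gamma (μ + 1 / 2) * ((1 / r) ^ (2 * μ) * Gamma (2 * μ)) :=
        mul_le_mul_of_nonneg_left
          (setIntegral_Ioi_one_exp_mul_sq_sub_one_rpow_le hμ hr) hprefactor
    _ = √π * (2 ^ (-μ) * (r ^ μ * (1 / r) ^ (2 * μ)) * Gamma (2 * μ) / Gamma (μ + 1 / 2)) := by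
        ring
    _ = √π * (2 ^ (-μ) * r ^ (-μ) * Gamma (2 * μ) / Gamma (μ + 1 / 2)) := by
        rw [hrpow]

/-- There is `C > 0` such that for all `μ ≥ 1/2` and `0 < r ≤ 1`,
`K_μ(r) ≤ C · 2^{-μ} r^{-μ} Γ(2μ) / Γ(μ + 1/2)`. -/
theorem statement7 :
    ∃ C : ℝ, 0 < C ∧ ∀ μ r : ℝ, 1 / 2 ≤ μ → 0 < r → r ≤ 1 →
      besselK μ r ≤ C * (2 ^ (-μ) * r ^ (-μ) * Real.Gamma (2 * μ) / Real.Gamma (μ + 1 / 2)) :=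
  ⟨√π, sqrt_pos.mpr pi_pos, fun _ _ hμ hr _ => besselK_le_sqrt_pi_mul hμ hr⟩
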